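/- Let f, g ∈ G be cofinal bumps with disjoint supports. Then the following are equivalent: (i) every h ∈ G with h ≠ id has support meeting support(f) ∪ support(g); (ii) there exists a real number a such that one of f, g has support {q ∈ ℚ : q < a} and the other has support {q ∈ ℚ : a < q}. -/

import Mathlib

open FirstOrder

/-- `G` is the group of all order-automorphisms of `(ℚ, <)` under composition. -/
abbrev G : Type := ℚ ≃o ℚ

/-- The support of `f ∈ G`: the set of points moved by `f`. -/
def support (f : G) : Set ℚ := {a : ℚ | f a ≠ a}

/-- The orbital relation of `f`: `a ~_f b` iff `f^m a ≤ b ≤ f^n a` for some integers `m, n`. -/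
def orbRel (f : G) (a b : ℚ) : Prop := ∃ m n : ℤ, (f ^ m) a ≤ b ∧ b ≤ (f ^ n) a

/-- An orbital of `f` is an equivalence class of the orbital relation of `f`. -/
def IsOrbital (f : G) (X : Set ℚ) : Prop := ∃ a : ℚ, X = {b : ℚ | orbRel f a b}

/-- An orbital is nontrivial if it contains a point moved by `f`. -/
def IsNontrivialOrbital (f : G) (X : Set ℚ) : Prop :=
  IsOrbital f X ∧ ∃ a ∈ X, f a ≠ a

/-- A bump is a non-identity element of `G` with exactly one nontrivial orbital. -/
def IsBump (f : G) : Prop := f ≠ 1 ∧ ∃! X : Set ℚ, IsNontrivialOrbital f X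

/-- `g` is a restriction of `f`: the support of `g` is contained in that of `f`, and
`g` agrees with `f` on the support of `g`. -/
def IsRestriction (g f : G) : Prop :=
  support g ⊆ support f ∧ ∀ a ∈ support g, g a = f a

/-- A cofinal bump: a bump whose support is bounded above or below in `ℚ` but not both. -/
def IsCofinalBump (f : G) : Prop :=
  IsBump f ∧
    ((BddAbove (support f) ∧ ¬ BddBelow (support f)) ∨
     (BddBelow (support f) ∧ ¬ BddAbove (support f)))

/-!
A fixed point of `f` is orbitally related only to itself, so a point lying between two points of
the unique nontrivial orbital of a bump is itself moved: the support of a bump is order-convex.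
It has no maximum or minimum (with `q` it contains `f q` and `f⁻¹ q`), so the support of a
cofinal bump is a ray `{q < a}` or `{a < q}` with real endpoint `a`. Disjoint supports force one
left ray `{q < α}` and one right ray `{β < q}` with `α ≤ β`. If `α < β`, conjugating a translation
by a Cantor isomorphism `(p, r) ≃o ℚ` gives a nontrivial element supported in a rational interval
`(p, r) ⊆ (α, β)`, which misses both supports. Conversely, a nontrivial `h` moves some `q`, and
`q ≠ h q` cannot both equal `a`.
-/

open Set

theorem OrderIso.exists_extend_Ioo {α : Type*} [LinearOrder α] {p r : α}
    (u : Ioo p r ≃o Ioo p r) :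
    ∃ h : α ≃o α, (∀ x : Ioo p r, h x = u x) ∧ ∀ x ∉ Ioo p r, h x = x := by
  classical
  set σ := Equiv.Perm.ofSubtype u.toEquiv
  have hσ : StrictMono σ := by
    intro a b hab
    by_cases ha : a ∈ Ioo p r <;> by_cases hb : b ∈ Ioo p r
    · rw [Equiv.Perm.ofSubtype_apply_of_mem _ ha, Equiv.Perm.ofSubtype_apply_of_mem _ hb]
      exact u.strictMono (Subtype.mk_lt_mk.2 hab)
    · have hrb : r ≤ b := not_lt.1 fun hbr => hb ⟨ha.1.trans hab, hbr⟩
      rw [Equiv.Perm.ofSubtype_apply_of_mem _ ha, Equiv.Perm.ofSubtype_apply_of_not_mem _ hb]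
      exact (u ⟨a, ha⟩).2.2.trans_le hrb
    · have hap : a ≤ p := not_lt.1 fun hpa => ha ⟨hpa, hab.trans hb.2⟩
      rw [Equiv.Perm.ofSubtype_apply_of_not_mem _ ha, Equiv.Perm.ofSubtype_apply_of_mem _ hb]
      exact hap.trans_lt (u ⟨b, hb⟩).2.1
    · rwa [Equiv.Perm.ofSubtype_apply_of_not_mem _ ha, Equiv.Perm.ofSubtype_apply_of_not_mem _ hb]
  exact ⟨hσ.orderIsoOfSurjective σ σ.surjective, Equiv.Perm.ofSubtype_apply_coe _,
    fun x hx => Equiv.Perm.ofSubtype_apply_of_not_mem _ hx⟩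

theorem exists_ne_one_support_subset_Ioo {p r : ℚ} (hpr : p < r) :
    ∃ h : G, h ≠ 1 ∧ support h ⊆ Ioo p r := by
  have : Nonempty (Ioo p r) := (nonempty_Ioo.2 hpr).to_subtype
  obtain ⟨e⟩ : Nonempty (Ioo p r ≃o ℚ) := Order.iso_of_countable_dense _ _
  obtain ⟨h, h_Ioo, h_compl⟩ := OrderIso.exists_extend_Ioo ((e.trans (.addRight 1)).trans e.symm)
  refine ⟨h, ?_, fun q hq => by_contra fun hq' => hq (h_compl q hq')⟩
  rintro rfl
  obtain ⟨x⟩ := this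
  have := congrArg e (Subtype.ext (h_Ioo x))
  simp at this

theorem apply_mem_support_iff {f : G} {q : ℚ} : f q ∈ support f ↔ q ∈ support f :=
  not_congr f.injective.eq_iff

theorem symm_apply_mem_support_iff {f : G} {q : ℚ} : f.symm q ∈ support f ↔ q ∈ support f := by
  rw [← apply_mem_support_iff, f.apply_symm_apply]

theorem support_nonempty {f : G} (hf : f ≠ 1) : (support f).Nonempty := by
  contrapose! hf
  ext q
  have : q ∉ support f := hf ▸ Set.notMem_empty q
  simpa [support] using this

theorem exists_mem_support_gt {f : G} {q : ℚ} (hq : q ∈ support f) :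
    ∃ r ∈ support f, q < r := by
  rcases lt_or_gt_of_ne hq with h | h
  · exact ⟨f.symm q, symm_apply_mem_support_iff.2 hq, f.lt_symm_apply.2 h⟩
  · exact ⟨f q, apply_mem_support_iff.2 hq, h⟩

theorem exists_mem_support_lt {f : G} {q : ℚ} (hq : q ∈ support f) :
    ∃ r ∈ support f, r < q := by
  rcases lt_or_gt_of_ne hq with h | h
  · exact ⟨f q, apply_mem_support_iff.2 hq, h⟩
  · exact ⟨f.symm q, symm_apply_mem_support_iff.2 hq, f.symm_apply_lt.2 h⟩

theorem orbRel_refl (f : G) (a : ℚ) : orbRel f a a :=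
  ⟨0, 0, le_rfl, le_rfl⟩

theorem eq_of_orbRel_of_apply_eq {f : G} {a b : ℚ} (hb : f b = b) (h : orbRel f a b) : a = b := by
  have hpow (k : ℤ) : (f ^ k) b = b := by
    induction k using Int.induction_on with
    | zero => rfl
    | succ k ih => rw [zpow_add_one, RelIso.mul_apply, hb, ih]
    | pred k ih => rw [zpow_sub_one, RelIso.mul_apply, ← hb, RelIso.inv_apply_self, hb, ih]
  obtain ⟨m, n, hm, hn⟩ := h
  rw [← hpow m, (f ^ m).le_iff_le] at hm
  rw [← hpow n, (f ^ n).le_iff_le] at hn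
  exact le_antisymm hm hn

theorem IsBump.ordConnected_support {f : G} (hf : IsBump f) : (support f).OrdConnected := by
  refine ⟨fun x hx z hz y ⟨hxy, hyz⟩ hy => ?_⟩
  obtain ⟨X, -, hX⟩ := hf.2
  have horb (a : ℚ) (ha : a ∈ support f) : {b | orbRel f a b} = X :=
    hX _ ⟨⟨a, rfl⟩, a, orbRel_refl f a, ha⟩
  have hxz : orbRel f x z := by
    have : z ∈ {b | orbRel f z b} := orbRel_refl f z
    rwa [horb z hz, ← horb x hx] at this
  obtain ⟨-, n, -, hzn⟩ := hxz
  obtain rfl := eq_of_orbRel_of_apply_eq hy ⟨0, n, hxy, hyz.trans hzn⟩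
  exact hx hy

namespace Set.OrdConnected

variable {s : Set ℚ}

theorem exists_eq_setOf_lt (hs : s.OrdConnected) (hbdd : BddAbove s) (hunbdd : ¬BddBelow s)
    (hmax : ∀ q ∈ s, ∃ r ∈ s, q < r) : ∃ a : ℝ, s = {q : ℚ | (q : ℝ) < a} := by
  have hne : s.Nonempty := by
    by_contra h
    exact hunbdd (not_nonempty_iff_eq_empty.1 h ▸ bddBelow_empty)
  refine ⟨sSup ((↑) '' s), Set.ext fun q => ⟨fun hq => ?_, fun hq => ?_⟩⟩
  · obtain ⟨r, hr, hqr⟩ := hmax q hq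
    exact (Rat.cast_lt.2 hqr).trans_le
      (le_csSup (Rat.cast_mono.map_bddAbove hbdd) (mem_image_of_mem ((↑) : ℚ → ℝ) hr))
  · obtain ⟨_, ⟨r, hr, rfl⟩, hqr⟩ := exists_lt_of_lt_csSup (hne.image ((↑) : ℚ → ℝ)) hq
    obtain ⟨p, hp, hpq⟩ := not_bddBelow_iff.1 hunbdd q
    exact hs.out hp hr ⟨hpq.le, Rat.cast_le.1 hqr.le⟩

theorem exists_eq_setOf_gt (hs : s.OrdConnected) (hbdd : BddBelow s) (hunbdd : ¬BddAbove s)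
    (hmin : ∀ q ∈ s, ∃ r ∈ s, r < q) : ∃ a : ℝ, s = {q : ℚ | a < (q : ℝ)} := by
  have hne : s.Nonempty := by
    by_contra h
    exact hunbdd (not_nonempty_iff_eq_empty.1 h ▸ bddAbove_empty)
  refine ⟨sInf ((↑) '' s), Set.ext fun q => ⟨fun hq => ?_, fun hq => ?_⟩⟩
  · obtain ⟨r, hr, hrq⟩ := hmin q hq
    exact (csInf_le (Rat.cast_mono.map_bddBelow hbdd)
      (mem_image_of_mem ((↑) : ℚ → ℝ) hr)).trans_lt (Rat.cast_lt.2 hrq)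
  · obtain ⟨_, ⟨r, hr, rfl⟩, hrq⟩ := exists_lt_of_csInf_lt (hne.image ((↑) : ℚ → ℝ)) hq
    obtain ⟨p, hp, hqp⟩ := not_bddAbove_iff.1 hunbdd q
    exact hs.out hr hp ⟨Rat.cast_le.1 hrq.le, hqp.le⟩

end Set.OrdConnected

theorem IsCofinalBump.support_eq {f : G} (hf : IsCofinalBump f) :
    (∃ a : ℝ, support f = {q : ℚ | (q : ℝ) < a}) ∨ ∃ a : ℝ, support f = {q : ℚ | a < (q : ℝ)} :=
  hf.2.imp
    (fun ⟨hbdd, hunbdd⟩ => hf.1.ordConnected_support.exists_eq_setOf_lt hbdd hunbdd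
      fun _ => exists_mem_support_gt)
    (fun ⟨hbdd, hunbdd⟩ => hf.1.ordConnected_support.exists_eq_setOf_gt hbdd hunbdd
      fun _ => exists_mem_support_lt)

theorem not_disjoint_setOf_lt (α β : ℝ) :
    ¬Disjoint {q : ℚ | (q : ℝ) < α} {q : ℚ | (q : ℝ) < β} := by
  obtain ⟨q, hq⟩ := exists_rat_lt (min α β)
  exact not_disjoint_iff.2 ⟨q, hq.trans_le (min_le_left α β), hq.trans_le (min_le_right α β)⟩

theorem not_disjoint_setOf_gt (α β : ℝ) :
    ¬Disjoint {q : ℚ | α < (q : ℝ)} {q : ℚ | β < (q : ℝ)} := by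
  obtain ⟨q, hq⟩ := exists_rat_gt (max α β)
  exact not_disjoint_iff.2 ⟨q, (le_max_left α β).trans_lt hq, (le_max_right α β).trans_lt hq⟩

theorem le_of_disjoint_setOf_lt_setOf_gt {α β : ℝ}
    (hd : Disjoint {q : ℚ | (q : ℝ) < α} {q : ℚ | β < (q : ℝ)}) : α ≤ β := by
  by_contra! hlt
  obtain ⟨q, hβq, hqα⟩ := exists_rat_btwn hlt
  exact disjoint_left.1 hd hqα hβq

theorem eq_of_forall_support_inter_nonempty {α β : ℝ}
    (hd : Disjoint {q : ℚ | (q : ℝ) < α} {q : ℚ | β < (q : ℝ)})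
    (H : ∀ h : G, h ≠ 1 →
      (support h ∩ ({q : ℚ | (q : ℝ) < α} ∪ {q : ℚ | β < (q : ℝ)})).Nonempty) :
    α = β := by
  refine (le_of_disjoint_setOf_lt_setOf_gt hd).antisymm (not_lt.1 fun hlt => ?_)
  obtain ⟨p, hαp, hpβ⟩ := exists_rat_btwn hlt
  obtain ⟨r, hpr, hrβ⟩ := exists_rat_btwn hpβ
  obtain ⟨h, h1, hsupp⟩ := exists_ne_one_support_subset_Ioo (Rat.cast_lt.1 hpr)
  obtain ⟨q, hq, hqα | hβq⟩ := H h h1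
  · have hpq : (p : ℝ) < q := Rat.cast_lt.2 (hsupp hq).1
    linarith [show (q : ℝ) < α from hqα]
  · have hqr : (q : ℝ) < r := Rat.cast_lt.2 (hsupp hq).2
    linarith [show β < (q : ℝ) from hβq]

theorem support_inter_setOf_lt_union_setOf_gt_nonempty {h : G} (h1 : h ≠ 1) (a : ℝ) :
    (support h ∩ ({q : ℚ | (q : ℝ) < a} ∪ {q : ℚ | a < (q : ℝ)})).Nonempty := by
  obtain ⟨q, hq⟩ := support_nonempty h1
  by_cases hqa : (q : ℝ) = a
  · refine ⟨h q, apply_mem_support_iff.2 hq, ?_⟩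
    exact lt_or_gt_of_ne (hqa ▸ Rat.cast_injective.ne hq)
  · exact ⟨q, hq, lt_or_gt_of_ne hqa⟩

/-- For cofinal bumps `f, g` with disjoint supports: every non-identity element of `G` has
support meeting `support f ∪ support g` iff there is a real `a` such that one of `f, g` has
support `{q | q < a}` and the other has support `{q | a < q}`. -/
theorem oppsupport_iff (f g : G) (hf : IsCofinalBump f) (hg : IsCofinalBump g)
    (hd : support f ∩ support g = ∅) :
    (∀ h : G, h ≠ 1 → (support h ∩ (support f ∪ support g)).Nonempty) ↔
      (∃ a : ℝ,
        (support f = {q : ℚ | (q : ℝ) < a} ∧ support g = {q : ℚ | a < (q : ℝ)}) ∨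
        (support g = {q : ℚ | (q : ℝ) < a} ∧ support f = {q : ℚ | a < (q : ℝ)})) := by
  rw [← disjoint_iff_inter_eq_empty] at hd
  constructor
  · intro H
    rcases hf.support_eq with ⟨α, hα⟩ | ⟨α, hα⟩ <;>
      rcases hg.support_eq with ⟨β, hβ⟩ | ⟨β, hβ⟩ <;> rw [hα, hβ] at hd H
    · exact (not_disjoint_setOf_lt α β hd).elim
    · exact ⟨α, .inl ⟨hα, eq_of_forall_support_inter_nonempty hd H ▸ hβ⟩⟩
    · rw [union_comm] at H
      exact ⟨β, .inr ⟨hβ, eq_of_forall_support_inter_nonempty hd.symm H ▸ hα⟩⟩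
    · exact (not_disjoint_setOf_gt α β hd).elim
  · rintro ⟨a, ⟨hf', hg'⟩ | ⟨hg', hf'⟩⟩ h h1 <;> rw [hf', hg']
    · exact support_inter_setOf_lt_union_setOf_gt_nonempty h1 a
    · rw [union_comm]
      exact support_inter_setOf_lt_union_setOf_gt_nonempty h1 a
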